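/- arXiv:1507.02147 — 8 statements merged into one kernel-verified Lean document; each statement's English description precedes it below -/
import Mathlib

section
/- The path metric of any isometric subgraph of a hypercube satisfies all 5-gonal inequalities: for any vertices a, b, c, x, y, d(x,y) + d(a,b) + d(a,c) + d(b,c) ≤ d(x,a)+d(x,b)+d(x,c)+d(y,a)+d(y,b)+d(y,c). -/
lemma five_gonal_bool : ∀ a b c x y : Bool,
    (if x = y then 0 else 1) + (if a = b then 0 else 1) + (if a = c then 0 else 1)
      + (if b = c then 0 else 1) ≤
    (if x = a then 0 else 1) + (if x = b then 0 else 1) + (if x = c then 0 else 1)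
      + (if y = a then 0 else 1) + (if y = b then 0 else 1) + (if y = c then 0 else (1:ℕ)) := by
  decide

lemma hammingDist_eq_sum {m : ℕ} (u v : Fin m → Bool) :
    hammingDist u v = ∑ i, if u i = v i then 0 else 1 := by
  simp [hammingDist, Finset.card_filter, eq_comm]

/-- The path metric of any isometric subgraph of a hypercube satisfies all
5-gonal inequalities. -/
theorem five_gonal_of_isometric_hypercube_subgraph
    {V : Type*} (G : SimpleGraph V) (m : ℕ) (φ : V → Fin m → Bool)
    (hiso : ∀ u v : V, G.dist u v = hammingDist (φ u) (φ v)) :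
    ∀ a b c x y : V,
      G.dist x y + G.dist a b + G.dist a c + G.dist b c ≤
        G.dist x a + G.dist x b + G.dist x c +
        G.dist y a + G.dist y b + G.dist y c := by
  intro a b c x y
  simp only [hiso, hammingDist_eq_sum, ← Finset.sum_add_distrib]
  exact Finset.sum_le_sum fun i _ => five_gonal_bool (φ a i) (φ b i) (φ c i) (φ x i) (φ y i)
end

section
/- The odd cycle C_n (n odd, n ≥ 3) embeds scale-2 isometrically into the hypercube H_n: there is a map φ: V(C_n) → {0,1}^n with 2·d_{C_n}(u,v) equal to the Hamming distance of φ(u), φ(v) for all u, v. -/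
/-- The path metric of the cycle `C_n`: `d(i,j) = min(|i-j|, n-|i-j|)`. -/
def cycleDist (n : ℕ) (i j : Fin n) : ℕ :=
  min (max i.val j.val - min i.val j.val) (n - (max i.val j.val - min i.val j.val))

private lemma msub (n t j : ℕ) (hj : j < n) (ht : t < n) :
    (j + (n - t)) % n = if j < t then j + (n - t) else j - t := by
  split_ifs with h
  · exact Nat.mod_eq_of_lt (by omega)
  · have h2 : j + (n - t) = (j - t) + n := by omega
    rw [h2, Nat.add_mod_right, Nat.mod_eq_of_lt (by omega)]

private lemma core (n m t : ℕ) (hn : n = 2*m+1) (hm : 1 ≤ m) (ht : t < n) :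
    ((Finset.range n).filter
      (fun j => decide (j < m) ≠ decide ((j + (n - t)) % n < m))).card
      = 2 * min t (n - t) := by
  by_cases hc : t ≤ m
  · have hset : (Finset.range n).filter
        (fun j => decide (j < m) ≠ decide ((j + (n - t)) % n < m))
        = Finset.range t ∪ Finset.Ico m (m + t) := by
      ext j
      simp only [Finset.mem_filter, Finset.mem_range, Finset.mem_union, Finset.mem_Ico,
        ne_eq, decide_eq_decide]
      by_cases hj : j < n
      · rw [msub n t j hj ht]
        split_ifs with h <;> omega
      · exact iff_of_false (fun h => hj h.1) (by omega)
    rw [hset, Finset.card_union_of_disjoint, Finset.card_range, Nat.card_Ico]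
    · omega
    · rw [Finset.disjoint_left]
      intro a ha hb
      simp only [Finset.mem_range, Finset.mem_Ico] at ha hb
      omega
  · have hset : (Finset.range n).filter
        (fun j => decide (j < m) ≠ decide ((j + (n - t)) % n < m))
        = Finset.Ico (t - (m+1)) m ∪ Finset.Ico t n := by
      ext j
      simp only [Finset.mem_filter, Finset.mem_range, Finset.mem_union, Finset.mem_Ico,
        ne_eq, decide_eq_decide]
      by_cases hj : j < n
      · rw [msub n t j hj ht]
        split_ifs with h <;> omega
      · exact iff_of_false (fun h => hj h.1) (by omega)
    rw [hset, Finset.card_union_of_disjoint, Nat.card_Ico, Nat.card_Ico]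
    · omega
    · rw [Finset.disjoint_left]
      intro a ha hb
      simp only [Finset.mem_Ico] at ha hb
      omega

private lemma card_shift (n u : ℕ) (hu : u < n) (P : ℕ → Prop) [DecidablePred P] :
    ((Finset.range n).filter P).card
      = ((Finset.range n).filter (fun j => P ((j + u) % n))).card := by
  have inv1 : ∀ a < n, ((a + (n - u)) % n + u) % n = a := by
    intro a ha
    rw [Nat.mod_add_mod]
    have h2 : a + (n - u) + u = a + n := by omega
    rw [h2, Nat.add_mod_right, Nat.mod_eq_of_lt ha]
  have inv2 : ∀ a < n, ((a + u) % n + (n - u)) % n = a := by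
    intro a ha
    rw [Nat.mod_add_mod]
    have h2 : a + u + (n - u) = a + n := by omega
    rw [h2, Nat.add_mod_right, Nat.mod_eq_of_lt ha]
  apply Finset.card_nbij' (i := fun j => (j + (n - u)) % n) (j := fun j => (j + u) % n)
  · intro a ha
    simp only [Finset.mem_coe, Finset.mem_filter, Finset.mem_range] at ha ⊢
    refine ⟨Nat.mod_lt _ (by omega), ?_⟩
    rw [inv1 a ha.1]; exact ha.2
  · intro a ha
    simp only [Finset.mem_coe, Finset.mem_filter, Finset.mem_range] at ha ⊢
    exact ⟨Nat.mod_lt _ (by omega), ha.2⟩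
  · intro a ha
    simp only [Finset.mem_coe, Finset.mem_filter, Finset.mem_range] at ha
    exact inv1 a ha.1
  · intro a ha
    simp only [Finset.mem_coe, Finset.mem_filter, Finset.mem_range] at ha
    exact inv2 a ha.1

private lemma finCard (n : ℕ) (P : ℕ → Prop) [DecidablePred P] :
    (Finset.univ.filter (fun j : Fin n => P j.val)).card
      = ((Finset.range n).filter P).card := by
  apply Finset.card_nbij (i := fun j => j.val)
  · intro a ha
    simp only [Finset.mem_filter, Finset.mem_univ, true_and, Finset.coe_filter] at ha ⊢
    simp only [Finset.mem_range]
    exact ⟨a.isLt, ha⟩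
  · intro a _ b _ hab
    exact Fin.val_injective hab
  · intro j hj
    simp only [Finset.coe_filter, Finset.mem_range, Set.mem_setOf_eq] at hj
    exact ⟨⟨j, hj.1⟩, by simp [hj.2], rfl⟩

/-- The odd cycle `C_n` (n odd, n ≥ 3) embeds scale-2 isometrically into
the hypercube `H_n`. -/
theorem odd_cycle_scale_two_embeds
    (n : ℕ) (hodd : Odd n) (hn : 3 ≤ n) :
    ∃ φ : Fin n → (Fin n → Bool),
      ∀ u v : Fin n, 2 * cycleDist n u v = hammingDist (φ u) (φ v) := by
  obtain ⟨m, hm⟩ := hodd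
  have hm1 : 1 ≤ m := by omega
  refine ⟨fun i j => decide ((j.val + (n - i.val)) % n < m), ?_⟩
  have key : ∀ u v : Fin n, u.val ≤ v.val →
      2 * cycleDist n u v
        = hammingDist (fun j : Fin n => decide ((j.val + (n - u.val)) % n < m))
            (fun j : Fin n => decide ((j.val + (n - v.val)) % n < m)) := by
    intro u v huv
    have hu := u.isLt
    have hv := v.isLt
    set t := v.val - u.val with htdef
    have ht : t < n := by omega
    have hd : hammingDist (fun j : Fin n => decide ((j.val + (n - u.val)) % n < m))
            (fun j : Fin n => decide ((j.val + (n - v.val)) % n < m))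
        = (Finset.univ.filter (fun j : Fin n =>
            decide ((j.val + (n - u.val)) % n < m) ≠ decide ((j.val + (n - v.val)) % n < m))).card := rfl
    rw [hd, finCard n (fun x => decide ((x + (n - u.val)) % n < m) ≠ decide ((x + (n - v.val)) % n < m)),
      card_shift n u.val hu]
    have hcong : (Finset.range n).filter
          (fun j => decide (((j + u.val) % n + (n - u.val)) % n < m)
            ≠ decide (((j + u.val) % n + (n - v.val)) % n < m))
        = (Finset.range n).filter
          (fun j => decide (j < m) ≠ decide ((j + (n - t)) % n < m)) := by
      apply Finset.filter_congr
      intro j hj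
      simp only [Finset.mem_range] at hj
      have e1 : ((j + u.val) % n + (n - u.val)) % n = j := by
        rw [Nat.mod_add_mod]
        have h2 : j + u.val + (n - u.val) = j + n := by omega
        rw [h2, Nat.add_mod_right, Nat.mod_eq_of_lt hj]
      have e2 : ((j + u.val) % n + (n - v.val)) % n = (j + (n - t)) % n := by
        rw [Nat.mod_add_mod]
        congr 1
        omega
      rw [e1, e2]
    rw [hcong, core n m t hm hm1 ht]
    have hcd : cycleDist n u v = min t (n - t) := by
      unfold cycleDist
      rw [max_eq_right huv, min_eq_left huv]
    rw [hcd]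
  intro u v
  rcases le_total u.val v.val with h | h
  · exact key u v h
  · rw [hammingDist_comm]
    have hc : cycleDist n u v = cycleDist n v u := by
      unfold cycleDist
      rw [max_comm (u.val) (v.val), min_comm (u.val) (v.val)]
    rw [hc]
    exact key v u h
end

section
/- The Petersen graph embeds scale-2 isometrically into the hypercube H_6: there is a map from its 10 vertices to {0,1}^6 such that twice the graph distance equals the Hamming distance of images. -/
/-- The Petersen graph: the Kneser graph on 2-element subsets of a 5-element set,
two subsets adjacent iff they are disjoint. -/
def petersen : SimpleGraph {s : Finset (Fin 5) // s.card = 2} :=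
  SimpleGraph.fromRel (fun s t => Disjoint s.1 t.1)

def petTbl (s : Finset (Fin 5)) : Fin 6 → Bool :=
  if s = {0,1} then ![false,false,false,false,false,false]
  else if s = {0,2} then ![false,false,true,true,true,true]
  else if s = {0,3} then ![true,true,false,false,true,true]
  else if s = {0,4} then ![true,true,true,true,false,false]
  else if s = {1,2} then ![true,true,false,true,false,true]
  else if s = {1,3} then ![false,true,true,true,true,false]
  else if s = {1,4} then ![true,false,true,false,true,true]
  else if s = {2,3} then ![true,false,true,false,false,false]
  else if s = {2,4} then ![false,true,false,false,true,false]
  else ![false,false,false,true,false,true]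

lemma pet_common_neighbor :
    ∀ u v : {s : Finset (Fin 5) // s.card = 2},
      u ≠ v → ¬ Disjoint u.1 v.1 →
      ∃ w : {s : Finset (Fin 5) // s.card = 2},
        u ≠ w ∧ v ≠ w ∧ Disjoint u.1 w.1 ∧ Disjoint w.1 v.1 := by
  decide

lemma petersen_dist (u v : {s : Finset (Fin 5) // s.card = 2}) :
    petersen.dist u v =
      (if u = v then 0 else if Disjoint u.1 v.1 then 1 else 2) := by
  by_cases h : u = v
  · simp [h]
  · simp only [h, if_false]
    by_cases hd : Disjoint u.1 v.1
    · simp only [hd, if_true]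
      rw [SimpleGraph.dist_eq_one_iff_adj]
      exact ⟨h, Or.inl hd⟩
    · simp only [hd, if_false]
      obtain ⟨w, huw, hvw, h1, h2⟩ := pet_common_neighbor u v h hd
      have a1 : petersen.Adj u w := ⟨huw, Or.inl h1⟩
      have a2 : petersen.Adj w v := ⟨fun e => hvw e.symm, Or.inr (Disjoint.symm h2)⟩
      have hle : petersen.dist u v ≤ 2 := by
        have := petersen.dist_le (a1.toWalk.append a2.toWalk)
        simpa using this
      have hne0 : petersen.dist u v ≠ 0 := by
        rw [Ne, SimpleGraph.dist_eq_zero_iff_eq_or_not_reachable]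
        push_neg
        exact ⟨h, ⟨(a1.toWalk.append a2.toWalk)⟩⟩
      have hne1 : petersen.dist u v ≠ 1 := by
        rw [Ne, SimpleGraph.dist_eq_one_iff_adj]
        intro ha
        exact hd.elim (ha.2.elim id fun h' => h'.symm)
      omega

/-- The Petersen graph embeds scale-2 isometrically into the hypercube `H_6`. -/
theorem petersen_scale_two_embeds :
    ∃ φ : {s : Finset (Fin 5) // s.card = 2} → (Fin 6 → Bool),
      ∀ u v, 2 * petersen.dist u v = hammingDist (φ u) (φ v) := by
  refine ⟨fun s => petTbl s.1, fun u v => ?_⟩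
  rw [petersen_dist]
  revert u v
  decide
end

section
/- The Double Odd graph DO_{2n-1} is a partial cube: it embeds isometrically into the hypercube H_{2n-1}. Concretely, the graph whose vertices are the subsets of a (2n-1)-element set of sizes n-1 and n, with two subsets adjacent iff one contains the other, is an isometric subgraph of H_{2n-1} via characteristic vectors. -/
/-- The Double Odd graph `DO_{2n-1}`: vertices are the subsets of a
`(2n-1)`-element set of sizes `n-1` and `n`, two subsets adjacent iff one
strictly contains the other. -/
def doubleOdd (n : ℕ) :
    SimpleGraph {s : Finset (Fin (2 * n - 1)) // s.card = n - 1 ∨ s.card = n} :=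
  SimpleGraph.fromRel (fun s t => s.1 ⊂ t.1)

lemma doubleOdd_adj_card {n : ℕ}
    {s t : {s : Finset (Fin (2 * n - 1)) // s.card = n - 1 ∨ s.card = n}}
    (h : (doubleOdd n).Adj s t) : (symmDiff s.1 t.1).card = 1 := by
  rw [doubleOdd, SimpleGraph.fromRel_adj] at h
  have hs := s.2; have ht := t.2
  obtain ⟨hne, h | h⟩ := h
  · have hlt := Finset.card_lt_card h
    rw [symmDiff_of_le h.subset, Finset.card_sdiff_of_subset h.subset]
    omega
  · have hlt := Finset.card_lt_card h
    rw [symmDiff_comm, symmDiff_of_le h.subset, Finset.card_sdiff_of_subset h.subset]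
    omega

lemma doubleOdd_walk_lb {n : ℕ}
    {s t : {s : Finset (Fin (2 * n - 1)) // s.card = n - 1 ∨ s.card = n}}
    (p : (doubleOdd n).Walk s t) : (symmDiff s.1 t.1).card ≤ p.length := by
  induction p with
  | nil => simp
  | @cons s u t h p ih =>
    have htri : symmDiff s.1 t.1 ⊆ symmDiff s.1 u.1 ∪ symmDiff u.1 t.1 :=
      symmDiff_triangle s.1 u.1 t.1
    calc (symmDiff s.1 t.1).card
        ≤ (symmDiff s.1 u.1 ∪ symmDiff u.1 t.1).card := Finset.card_le_card htri
      _ ≤ (symmDiff s.1 u.1).card + (symmDiff u.1 t.1).card := Finset.card_union_le _ _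
      _ ≤ 1 + p.length := by
          have := doubleOdd_adj_card h; omega
      _ = (SimpleGraph.Walk.cons h p).length := by simp [SimpleGraph.Walk.length_cons]; omega

lemma doubleOdd_exists_walk {n : ℕ} (hn : 1 ≤ n) :
    ∀ (k : ℕ) (s t : {s : Finset (Fin (2 * n - 1)) // s.card = n - 1 ∨ s.card = n}),
      (symmDiff s.1 t.1).card = k → ∃ p : (doubleOdd n).Walk s t, p.length = k := by
  intro k
  induction k with
  | zero =>
    intro s t h
    rw [Finset.card_eq_zero] at h
    have : s.1 = t.1 := by
      have := symmDiff_eq_bot.mp h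
      exact this
    have : s = t := Subtype.ext this
    subst this
    exact ⟨SimpleGraph.Walk.nil, rfl⟩
  | succ k ih =>
    intro s t h
    have hne : s.1 ≠ t.1 := by
      intro he; rw [he] at h; simp at h
    have hs := s.2; have ht := t.2
    rcases hs with hs | hs
    · -- s has card n-1, add an element of t \ s
      have hnsub : ¬ t.1 ⊆ s.1 := by
        intro hsub
        have hle := Finset.card_le_card hsub
        have : s.1.card ≤ t.1.card := by omega
        exact hne (Finset.eq_of_subset_of_card_le hsub this).symm
      obtain ⟨a, ha, has⟩ := Finset.not_subset.mp hnsub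
      refine ?_
      set s' : {s : Finset (Fin (2 * n - 1)) // s.card = n - 1 ∨ s.card = n} :=
        ⟨insert a s.1, Or.inr (by rw [Finset.card_insert_of_notMem has, hs]; omega)⟩ with hs'
      have hadj : (doubleOdd n).Adj s s' := by
        rw [doubleOdd, SimpleGraph.fromRel_adj]
        refine ⟨?_, Or.inl (Finset.ssubset_insert has)⟩
        intro he
        apply has
        have : s.1 = insert a s.1 := congrArg Subtype.val he
        rw [this]; exact Finset.mem_insert_self a s.1
      have hsd : symmDiff s'.1 t.1 = (symmDiff s.1 t.1).erase a := by
        ext i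
        by_cases hia : i = a <;>
          simp [hs', Finset.mem_symmDiff, Finset.mem_insert, Finset.mem_erase, hia, ha, has]
      have hmem : a ∈ symmDiff s.1 t.1 := by
        rw [Finset.mem_symmDiff]; exact Or.inr ⟨ha, has⟩
      have hcard : (symmDiff s'.1 t.1).card = k := by
        rw [hsd, Finset.card_erase_of_mem hmem, h]; omega
      obtain ⟨p, hp⟩ := ih s' t hcard
      exact ⟨SimpleGraph.Walk.cons hadj p, by simp [SimpleGraph.Walk.length_cons, hp]⟩
    · -- s has card n, remove an element of s \ t
      have hnsub : ¬ s.1 ⊆ t.1 := by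
        intro hsub
        have hle := Finset.card_le_card hsub
        have : t.1.card ≤ s.1.card := by omega
        exact hne (Finset.eq_of_subset_of_card_le hsub this)
      obtain ⟨b, hb, hbt⟩ := Finset.not_subset.mp hnsub
      set s' : {s : Finset (Fin (2 * n - 1)) // s.card = n - 1 ∨ s.card = n} :=
        ⟨s.1.erase b, Or.inl (by rw [Finset.card_erase_of_mem hb, hs])⟩ with hs'
      have hadj : (doubleOdd n).Adj s s' := by
        rw [doubleOdd, SimpleGraph.fromRel_adj]
        refine ⟨?_, Or.inr (Finset.erase_ssubset hb)⟩
        intro he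
        have : s.1 = s.1.erase b := congrArg Subtype.val he
        have hb' : b ∈ s.1.erase b := this ▸ hb
        exact (Finset.notMem_erase b s.1) hb'
      have hsd : symmDiff s'.1 t.1 = (symmDiff s.1 t.1).erase b := by
        ext i
        by_cases hib : i = b <;>
          simp [hs', Finset.mem_symmDiff, Finset.mem_erase, hib, hb, hbt]
      have hmem : b ∈ symmDiff s.1 t.1 := by
        rw [Finset.mem_symmDiff]; exact Or.inl ⟨hb, hbt⟩
      have hcard : (symmDiff s'.1 t.1).card = k := by
        rw [hsd, Finset.card_erase_of_mem hmem, h]; omega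
      obtain ⟨p, hp⟩ := ih s' t hcard
      exact ⟨SimpleGraph.Walk.cons hadj p, by simp [SimpleGraph.Walk.length_cons, hp]⟩

/-- `DO_{2n-1}` is a partial cube: via characteristic vectors, the graph
distance equals the Hamming distance, i.e. the size of the symmetric difference. -/
theorem doubleOdd_partial_cube (n : ℕ) (hn : 1 ≤ n) :
    ∀ s t : {s : Finset (Fin (2 * n - 1)) // s.card = n - 1 ∨ s.card = n},
      (doubleOdd n).dist s t
        = hammingDist (fun i => decide (i ∈ s.1)) (fun i => decide (i ∈ t.1)) ∧
      (doubleOdd n).dist s t = (symmDiff s.1 t.1).card := by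
  intro s t
  have hdist : (doubleOdd n).dist s t = (symmDiff s.1 t.1).card := by
    obtain ⟨p, hp⟩ := doubleOdd_exists_walk hn (symmDiff s.1 t.1).card s t rfl
    have hr : (doubleOdd n).Reachable s t := ⟨p⟩
    have h1 : (doubleOdd n).dist s t ≤ (symmDiff s.1 t.1).card :=
      hp ▸ SimpleGraph.dist_le p
    obtain ⟨q, hq⟩ := hr.exists_walk_length_eq_dist
    have h2 := doubleOdd_walk_lb q
    omega
  have hham : hammingDist (fun i => decide (i ∈ s.1)) (fun i => decide (i ∈ t.1))
      = (symmDiff s.1 t.1).card := by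
    rw [hammingDist]
    congr 1
    ext i
    by_cases h1 : i ∈ s.1 <;> by_cases h2 : i ∈ t.1 <;>
      simp [Finset.mem_symmDiff, h1, h2]
  exact ⟨by rw [hdist, hham], hdist⟩
end

section
/- The Fibonacci cube Fi(n), the subgraph of the hypercube H_n induced by binary strings with no two consecutive ones, is a partial cube: for any two Fibonacci strings x, y, their distance in Fi(n) equals their Hamming distance. -/
/-- A binary string of length `n` is a Fibonacci string if it has no two
consecutive ones. -/
def IsFibonacciString {n : ℕ} (x : Fin n → Bool) : Prop :=
  ∀ i : ℕ, ∀ h : i + 1 < n, ¬(x ⟨i, Nat.lt_of_succ_lt h⟩ = true ∧ x ⟨i + 1, h⟩ = true)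

/-- The Fibonacci cube `Fi(n)`: the subgraph of `H_n` induced by Fibonacci strings. -/
def fibonacciCube (n : ℕ) : SimpleGraph {x : Fin n → Bool // IsFibonacciString x} :=
  SimpleGraph.fromRel (fun x y => hammingDist x.1 y.1 = 1)

namespace FibAux

variable {n : ℕ}

lemma fib_update_false {x : Fin n → Bool} (hx : IsFibonacciString x) (i : Fin n) :
    IsFibonacciString (Function.update x i false) := by
  intro j h hj
  apply hx j h
  constructor
  · have := hj.1
    by_cases e : (⟨j, Nat.lt_of_succ_lt h⟩ : Fin n) = i
    · rw [e, Function.update_self] at this; exact absurd this (by simp)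
    · rwa [Function.update_of_ne e] at this
  · have := hj.2
    by_cases e : (⟨j + 1, h⟩ : Fin n) = i
    · rw [e, Function.update_self] at this; exact absurd this (by simp)
    · rwa [Function.update_of_ne e] at this

lemma fib_update_true {x : Fin n → Bool} (hx : IsFibonacciString x) (i : Fin n)
    (hprev : ∀ (h : ℕ) (hh : (i : ℕ) = h + 1), x ⟨h, by have := i.2; omega⟩ = false)
    (hnext : ∀ (hh : (i : ℕ) + 1 < n), x ⟨(i : ℕ) + 1, hh⟩ = false) :
    IsFibonacciString (Function.update x i true) := by
  intro j h hj
  by_cases e1 : (⟨j, Nat.lt_of_succ_lt h⟩ : Fin n) = i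
  · -- then j+1 is the successor of i
    have hji : j = (i : ℕ) := by simpa using congrArg Fin.val e1
    have := hj.2
    have hne : (⟨j + 1, h⟩ : Fin n) ≠ i := by
      intro e; have : j + 1 = (i : ℕ) := by simpa using congrArg Fin.val e
      omega
    rw [Function.update_of_ne hne] at this
    have := hnext (hji ▸ h)
    simp_all
  · by_cases e2 : (⟨j + 1, h⟩ : Fin n) = i
    · have hji : j + 1 = (i : ℕ) := by simpa using congrArg Fin.val e2
      have := hj.1
      rw [Function.update_of_ne e1] at this
      have := hprev j hji.symm
      simp_all
    · exact hx j h ⟨by rw [Function.update_of_ne e1] at hj; exact hj.1,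
        by rw [Function.update_of_ne e2] at hj; exact hj.2⟩

lemma hamming_update_self (x : Fin n → Bool) (i : Fin n) (b : Bool) (hb : b ≠ x i) :
    hammingDist x (Function.update x i b) = 1 := by
  unfold hammingDist
  convert Finset.card_singleton i
  ext j
  by_cases e : j = i
  · subst e; simp [hb.symm]
  · simp [Function.update_of_ne e, e]

lemma hamming_update_step {x y : Fin n → Bool} (i : Fin n) (hi : x i ≠ y i) :
    hammingDist (Function.update x i (y i)) y + 1 = hammingDist x y := by
  unfold hammingDist
  have : Finset.filter (fun j => x j ≠ y j) Finset.univ =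
      insert i (Finset.filter (fun j => Function.update x i (y i) j ≠ y j) Finset.univ) := by
    ext j
    by_cases e : j = i
    · subst e; simp [hi]
    · simp [Function.update_of_ne e, e]
  rw [this, Finset.card_insert_of_notMem (by simp)]

lemma adj_of_hamming {x y : {x : Fin n → Bool // IsFibonacciString x}}
    (h : hammingDist x.1 y.1 = 1) : (fibonacciCube n).Adj x y := by
  have hne : x ≠ y := by
    intro e; rw [e, hammingDist_self] at h; simp at h
  exact ⟨hne, Or.inl h⟩

/-- key step: from x ≠ y find a fibonacci neighbor of x closer to y. -/
lemma step {x y : Fin n → Bool} (hx : IsFibonacciString x) (hy : IsFibonacciString y)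
    (hne : x ≠ y) :
    ∃ z : Fin n → Bool, IsFibonacciString z ∧ hammingDist x z = 1 ∧
      hammingDist z y + 1 = hammingDist x y := by
  classical
  have hset : ({j | x j ≠ y j} : Finset (Fin n)).Nonempty := by
    rw [Finset.nonempty_iff_ne_empty]
    intro h
    apply hne
    funext j
    by_contra hj
    have : j ∈ ({j | x j ≠ y j} : Finset (Fin n)) := by simpa using hj
    simp [h] at this
  set i' := ({j | x j ≠ y j} : Finset (Fin n)).min' hset with hi
  have hmem : i' ∈ ({j | x j ≠ y j} : Finset (Fin n)) := Finset.min'_mem _ _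
  have hdiff : x i' ≠ y i' := by simpa using hmem
  have hagree : ∀ j : Fin n, j < i' → x j = y j := by
    intro j hj
    by_contra hc
    have : i' ≤ j := Finset.min'_le _ _ (by simpa using hc)
    exact absurd hj (not_lt.mpr this)
  cases hxv : x i' with
  | true =>
    -- flip x i' to false = y i'
    have hyv : y i' = false := by
      cases h : y i' <;> simp_all
    refine ⟨Function.update x i' false, fib_update_false hx i', ?_, ?_⟩
    · exact hamming_update_self x i' false (by simp [hxv])
    · have := hamming_update_step i' hdiff
      rwa [hyv] at this
  | false =>
    have hyv : y i' = true := by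
      cases h : y i' <;> simp_all
    by_cases hnx : ∃ hh : (i' : ℕ) + 1 < n, x ⟨(i' : ℕ) + 1, hh⟩ = true
    · obtain ⟨hh, hxsucc⟩ := hnx
      -- y at i'+1 is false since y i' = true and y fibonacci
      have hysucc : y ⟨(i' : ℕ) + 1, hh⟩ = false := by
        by_contra hc
        exact hy i' hh ⟨by simpa using hyv, by cases h : y ⟨(i' : ℕ) + 1, hh⟩ <;> simp_all⟩
      have hdiff2 : x ⟨(i' : ℕ) + 1, hh⟩ ≠ y ⟨(i' : ℕ) + 1, hh⟩ := by
        rw [hxsucc, hysucc]; simp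
      refine ⟨Function.update x ⟨(i' : ℕ) + 1, hh⟩ false, fib_update_false hx _, ?_, ?_⟩
      · exact hamming_update_self x _ false (by simp [hxsucc])
      · have := hamming_update_step _ hdiff2
        rwa [hysucc] at this
    · -- flip x i' to true
      push_neg at hnx
      refine ⟨Function.update x i' true, ?_, ?_, ?_⟩
      · apply fib_update_true hx i'
        · intro h hh
          -- x at position h (= i'-1): equals y there since < i', and y there false by y fib
          have hlt : (⟨h, by have := i'.2; omega⟩ : Fin n) < i' := by
            simp only [Fin.lt_def]; omega
          rw [hagree _ hlt]
          by_contra hc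
          have hh2 : h + 1 < n := hh ▸ i'.2
          apply hy h hh2
          constructor
          · cases hhh : y ⟨h, _⟩ <;> simp_all
          · have : (⟨h + 1, hh2⟩ : Fin n) = i' := by
              apply Fin.ext; simp [hh]
            rw [this]; exact hyv
        · intro hh
          cases h : x ⟨(i' : ℕ) + 1, hh⟩ with
          | false => rfl
          | true => exact absurd h (hnx hh)
      · exact hamming_update_self x i' true (by simp [hxv])
      · have := hamming_update_step i' hdiff
        rwa [hyv] at this

lemma exists_walk {n : ℕ} : ∀ (d : ℕ) (x y : {x : Fin n → Bool // IsFibonacciString x}),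
    hammingDist x.1 y.1 = d → ∃ p : (fibonacciCube n).Walk x y, p.length = d := by
  intro d
  induction d with
  | zero =>
    intro x y h
    have : x = y := Subtype.ext (eq_of_hammingDist_eq_zero h)
    subst this
    exact ⟨SimpleGraph.Walk.nil, rfl⟩
  | succ d ih =>
    intro x y h
    have hne : x.1 ≠ y.1 := by
      intro e; rw [e, hammingDist_self] at h; simp at h
    obtain ⟨z, hz, h1, h2⟩ := step x.2 y.2 hne
    have hzd : hammingDist (⟨z, hz⟩ : {x : Fin n → Bool // IsFibonacciString x}).1 y.1 = d := by
      simp only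
      omega
    obtain ⟨p, hp⟩ := ih ⟨z, hz⟩ y hzd
    exact ⟨SimpleGraph.Walk.cons (adj_of_hamming h1) p, by simp [hp]⟩

lemma hamming_le_walk_length {n : ℕ} {x y : {x : Fin n → Bool // IsFibonacciString x}}
    (p : (fibonacciCube n).Walk x y) : hammingDist x.1 y.1 ≤ p.length := by
  induction p with
  | nil => simp
  | @cons u v w hadj q ih =>
    have h1 : hammingDist u.1 v.1 = 1 := by
      rcases hadj.2 with h' | h'
      · exact h'
      · rw [hammingDist_comm]; exact h'
    calc hammingDist u.1 w.1 ≤ hammingDist u.1 v.1 + hammingDist v.1 w.1 :=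
          hammingDist_triangle _ _ _
      _ ≤ 1 + q.length := by rw [h1]; omega
      _ = (SimpleGraph.Walk.cons hadj q).length := by simp [Nat.add_comm]

end FibAux

/-- The Fibonacci cube is a partial cube: its graph distance equals Hamming distance. -/
theorem fibonacciCube_partial_cube (n : ℕ)
    (x y : {x : Fin n → Bool // IsFibonacciString x}) :
    (fibonacciCube n).dist x y = hammingDist x.1 y.1 := by
  obtain ⟨p, hp⟩ := FibAux.exists_walk (hammingDist x.1 y.1) x y rfl
  apply le_antisymm
  · calc (fibonacciCube n).dist x y ≤ p.length := SimpleGraph.dist_le p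
      _ = _ := hp
  · have hr : (fibonacciCube n).Reachable x y := ⟨p⟩
    obtain ⟨q, hq⟩ := hr.exists_walk_length_eq_dist
    calc hammingDist x.1 y.1 ≤ q.length := FibAux.hamming_le_walk_length q
      _ = _ := hq
end

section
/- The Lucas cube Lu(n), the subgraph of H_n induced by binary strings with no two consecutive ones cyclically (in particular not both the first and last coordinate equal to 1), is a partial cube: distances in Lu(n) equal Hamming distances. -/
/-- A binary string of length `n` is a Lucas string if it has no two cyclically
consecutive ones (in particular, not both the first and last coordinates are one). -/
def IsLucasString {n : ℕ} (x : Fin n → Bool) : Prop :=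
  ∀ i : Fin n, ¬(x i = true ∧ x ⟨(i.val + 1) % n, Nat.mod_lt _ i.pos⟩ = true)

/-- The Lucas cube `Lu(n)`: the subgraph of `H_n` induced by Lucas strings. -/
def lucasCube (n : ℕ) : SimpleGraph {x : Fin n → Bool // IsLucasString x} :=
  SimpleGraph.fromRel (fun x y => hammingDist x.1 y.1 = 1)

/-- Any string pointwise below a Lucas string is a Lucas string. -/
lemma isLucas_of_le {n : ℕ} {x z : Fin n → Bool} (hx : IsLucasString x)
    (h : ∀ i, z i = true → x i = true) : IsLucasString z := by
  intro i ⟨h1, h2⟩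
  exact hx i ⟨h i h1, h _ h2⟩

lemma hd_update {n : ℕ} (x y : Fin n → Bool) (i : Fin n) (h : x i ≠ y i) :
    hammingDist (Function.update x i (y i)) y + 1 = hammingDist x y := by
  have key : (Finset.univ.filter fun j => x j ≠ y j) =
      insert i (Finset.univ.filter fun j => Function.update x i (y i) j ≠ y j) := by
    ext j
    simp only [Finset.mem_filter, Finset.mem_univ, true_and, Finset.mem_insert]
    by_cases hj : j = i
    · subst hj; simp [h]
    · simp [Function.update_of_ne hj, hj]
  show (Finset.univ.filter fun j => Function.update x i (y i) j ≠ y j).card + 1 =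
      (Finset.univ.filter fun j => x j ≠ y j).card
  rw [key, Finset.card_insert_of_notMem (by simp)]

lemma hd_update_self {n : ℕ} (x : Fin n → Bool) (i : Fin n) (b : Bool) (h : b ≠ x i) :
    hammingDist x (Function.update x i b) = 1 := by
  unfold hammingDist
  have : ({j | x j ≠ Function.update x i b j} : Finset (Fin n)) = {i} := by
    ext j
    by_cases hj : j = i
    · subst hj; simp [Function.update_self, Ne.symm h]
    · simp [Function.update_of_ne hj, hj]
  rw [this, Finset.card_singleton]

lemma hd_le_walk_length {n : ℕ} (x y : {x : Fin n → Bool // IsLucasString x})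
    (p : (lucasCube n).Walk x y) : hammingDist x.1 y.1 ≤ p.length := by
  induction p with
  | nil => simp
  | cons h p ih =>
    rename_i u v w
    have hadj : hammingDist u.1 v.1 = 1 := by
      rcases h.2 with h1 | h1
      · exact h1
      · rw [hammingDist_comm]; exact h1
    calc hammingDist u.1 w.1 ≤ hammingDist u.1 v.1 + hammingDist v.1 w.1 :=
          hammingDist_triangle _ _ _
      _ ≤ 1 + p.length := by rw [hadj]; exact Nat.add_le_add_left ih 1
      _ = (SimpleGraph.Walk.cons h p).length := by simp [Nat.add_comm]

lemma exists_walk {n : ℕ} (d : ℕ) (x y : {x : Fin n → Bool // IsLucasString x})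
    (hd : hammingDist x.1 y.1 = d) :
    ∃ p : (lucasCube n).Walk x y, p.length = d := by
  induction d generalizing x with
  | zero =>
    have : x = y := Subtype.ext (hammingDist_eq_zero.mp hd)
    subst this; exact ⟨SimpleGraph.Walk.nil, rfl⟩
  | succ d ih =>
    -- find a coordinate to flip
    have hne : x.1 ≠ y.1 := by
      intro h; rw [h] at hd; simp at hd
    obtain ⟨z, hzL, hzi⟩ : ∃ z : Fin n → Bool, IsLucasString z ∧
        ∃ i : Fin n, x.1 i ≠ y.1 i ∧ z = Function.update x.1 i (y.1 i) := by
      by_cases hcase : ∃ i, x.1 i = true ∧ y.1 i = false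
      · obtain ⟨i, hi1, hi2⟩ := hcase
        refine ⟨Function.update x.1 i (y.1 i), ?_, i, by simp [hi1, hi2], rfl⟩
        apply isLucas_of_le x.2
        intro j hj
        by_cases hji : j = i
        · subst hji; rw [Function.update_self, hi2] at hj; exact absurd hj (by simp)
        · rwa [Function.update_of_ne hji] at hj
      · push_neg at hcase
        obtain ⟨i, hi⟩ : ∃ i, x.1 i ≠ y.1 i := Function.ne_iff.mp hne
        refine ⟨Function.update x.1 i (y.1 i), ?_, i, hi, rfl⟩
        apply isLucas_of_le y.2
        intro j hj
        by_cases hji : j = i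
        · subst hji; rwa [Function.update_self] at hj
        · rw [Function.update_of_ne hji] at hj
          simpa using hcase j hj
    obtain ⟨i, hi, rfl⟩ := hzi
    set z : {x : Fin n → Bool // IsLucasString x} := ⟨Function.update x.1 i (y.1 i), hzL⟩
    have hadj : (lucasCube n).Adj x z := by
      refine ⟨?_, Or.inl (hd_update_self x.1 i (y.1 i) (Ne.symm hi))⟩
      intro h
      have := congrArg (fun w => w.1 i) h
      simp only [z, Function.update_self] at this
      exact hi this
    have hzd : hammingDist z.1 y.1 = d := by
      have h2 := hd_update x.1 y.1 i hi
      show hammingDist (Function.update x.1 i (y.1 i)) y.1 = d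
      omega
    obtain ⟨p, hp⟩ := ih z hzd
    exact ⟨SimpleGraph.Walk.cons hadj p, by simp [hp]⟩

/-- The Lucas cube is a partial cube: its graph distance equals Hamming distance. -/
theorem lucasCube_partial_cube (n : ℕ)
    (x y : {x : Fin n → Bool // IsLucasString x}) :
    (lucasCube n).dist x y = hammingDist x.1 y.1 := by
  obtain ⟨p, hp⟩ := exists_walk (hammingDist x.1 y.1) x y rfl
  refine le_antisymm (hp ▸ SimpleGraph.dist_le p) ?_
  obtain ⟨q, hq⟩ := SimpleGraph.Reachable.exists_walk_length_eq_dist ⟨p⟩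
  exact hq ▸ hd_le_walk_length x y q
end

section
/- Any metric embeddable scale-λ isometrically into a hypercube satisfies all hypermetric inequalities: if d is a metric on a finite set V such that λ·d equals the Hamming distance under some map V → {0,1}^m, then for all integer vectors b with Σ b_i = 1, Σ_{i<j} b_i b_j d(v_i, v_j) ≤ 0. -/
open Finset

lemma hyp_aux (n : ℕ) (b x : Fin n → ℤ) (hx : ∀ i, x i * x i = x i)
    (hb : (∑ i, b i) = 1) :
    ∑ p ∈ Finset.univ.filter (fun p : Fin n × Fin n => p.1 < p.2),
      b p.1 * b p.2 * (x p.1 + x p.2 - 2 * x p.1 * x p.2) ≤ 0 := by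
  set S := ∑ i, b i * x i with hS
  set f : Fin n × Fin n → ℤ := fun p => b p.1 * b p.2 * (x p.1 + x p.2 - 2 * x p.1 * x p.2) with hf
  have hfull : ∑ p : Fin n × Fin n, f p = 2 * S - 2 * S * S := by
    have : ∑ p : Fin n × Fin n, f p =
        ∑ i : Fin n, ∑ j : Fin n, (b i * x i * b j + b i * (b j * x j) - 2 * (b i * x i) * (b j * x j)) := by
      rw [← Finset.sum_product']
      apply Finset.sum_congr rfl
      intro p _
      simp only [hf]; ring
    rw [this]
    simp only [Finset.sum_sub_distrib, Finset.sum_add_distrib, ← Finset.mul_sum, ← Finset.sum_mul]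
    rw [hb]
    ring
  have hdiag : ∑ p ∈ Finset.univ.filter (fun p : Fin n × Fin n => p.1 = p.2), f p = 0 := by
    apply Finset.sum_eq_zero
    intro p hp
    simp only [Finset.mem_filter] at hp
    have := hx p.1
    simp only [hf, ← hp.2]
    nlinarith [hx p.1]
  have hswap : ∑ p ∈ Finset.univ.filter (fun p : Fin n × Fin n => p.2 < p.1), f p =
      ∑ p ∈ Finset.univ.filter (fun p : Fin n × Fin n => p.1 < p.2), f p := by
    apply Finset.sum_nbij' (fun p => Prod.swap p) (fun p => Prod.swap p) <;>
      simp [hf] <;> intros <;> ring_nf <;> simp_all <;> ring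
  have hsplit : ∑ p : Fin n × Fin n, f p =
      2 * ∑ p ∈ Finset.univ.filter (fun p : Fin n × Fin n => p.1 < p.2), f p := by
    have h1 : (Finset.univ : Finset (Fin n × Fin n)) =
        (Finset.univ.filter (fun p : Fin n × Fin n => p.1 < p.2)) ∪
        ((Finset.univ.filter (fun p : Fin n × Fin n => p.2 < p.1)) ∪
         (Finset.univ.filter (fun p : Fin n × Fin n => p.1 = p.2))) := by
      ext p; simp [lt_or_lt_iff_ne, eq_comm]
      rcases lt_trichotomy p.1 p.2 with h|h|h <;> tauto
    conv_lhs => rw [h1]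
    rw [Finset.sum_union, Finset.sum_union, hswap, hdiag]
    · ring
    · rw [Finset.disjoint_filter]
      intro p _ h1 h2; exact absurd h2.symm (ne_of_lt h1)
    · rw [Finset.disjoint_left]
      intro p hp hp2
      simp only [Finset.mem_union, Finset.mem_filter, Finset.mem_univ, true_and] at hp hp2
      rcases hp2 with h2|h2
      · exact absurd hp (lt_asymm h2)
      · exact absurd h2 (ne_of_lt hp)
  have key : 2 * ∑ p ∈ Finset.univ.filter (fun p : Fin n × Fin n => p.1 < p.2), f p
      = 2 * (S * (1 - S)) := by rw [← hsplit, hfull]; ring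
  have h2 : ∑ p ∈ Finset.univ.filter (fun p : Fin n × Fin n => p.1 < p.2), f p = S * (1 - S) := by
    omega
  rw [h2]
  rcases le_or_gt S 0 with hs | hs
  · exact mul_nonpos_of_nonpos_of_nonneg hs (by omega)
  · exact mul_nonpos_of_nonneg_of_nonpos (by omega) (by omega)

/-- Any metric embeddable scale-λ isometrically into a hypercube satisfies all
hypermetric inequalities. -/
theorem hypermetric_of_scale_embedding
    {V : Type*} (d : V → V → ℝ) (lam m : ℕ) (hlam : 0 < lam)
    (φ : V → Fin m → Bool)
    (h : ∀ u v : V, (lam : ℝ) * d u v = (hammingDist (φ u) (φ v) : ℝ)) :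
    ∀ n : ℕ, ∀ b : Fin n → ℤ, ∀ v : Fin n → V, (∑ i, b i) = 1 →
      ∑ p ∈ Finset.univ.filter (fun p : Fin n × Fin n => p.1 < p.2),
        (b p.1 : ℝ) * (b p.2 : ℝ) * d (v p.1) (v p.2) ≤ 0 := by
  intro n b v hb
  have hl : (0:ℝ) < lam := by exact_mod_cast hlam
  have hmain : (lam : ℝ) * ∑ p ∈ Finset.univ.filter (fun p : Fin n × Fin n => p.1 < p.2),
      (b p.1 : ℝ) * (b p.2 : ℝ) * d (v p.1) (v p.2) ≤ 0 := by
    rw [Finset.mul_sum]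
    have hrw : ∀ p ∈ Finset.univ.filter (fun p : Fin n × Fin n => p.1 < p.2),
        (lam:ℝ) * ((b p.1 : ℝ) * (b p.2 : ℝ) * d (v p.1) (v p.2)) =
        ∑ k : Fin m, (b p.1 : ℝ) * (b p.2 : ℝ) *
          (if φ (v p.1) k ≠ φ (v p.2) k then (1:ℝ) else 0) := by
      intro p _
      have : (lam:ℝ) * ((b p.1 : ℝ) * (b p.2 : ℝ) * d (v p.1) (v p.2)) =
          (b p.1 : ℝ) * (b p.2 : ℝ) * ((lam:ℝ) * d (v p.1) (v p.2)) := by ring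
      rw [this, h]
      rw [hammingDist, Finset.card_filter]
      push_cast
      rw [Finset.mul_sum]
    rw [Finset.sum_congr rfl hrw, Finset.sum_comm]
    apply Finset.sum_nonpos
    intro k _
    set x : Fin n → ℤ := fun i => if φ (v i) k then 1 else 0 with hxdef
    have hx : ∀ i, x i * x i = x i := by
      intro i; simp only [hxdef]; by_cases hi : φ (v i) k <;> simp [hi]
    have := hyp_aux n b x hx hb
    have hcast : ∑ p ∈ Finset.univ.filter (fun p : Fin n × Fin n => p.1 < p.2),
        (b p.1 : ℝ) * (b p.2 : ℝ) * (if φ (v p.1) k ≠ φ (v p.2) k then (1:ℝ) else 0) =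
        ((∑ p ∈ Finset.univ.filter (fun p : Fin n × Fin n => p.1 < p.2),
          b p.1 * b p.2 * (x p.1 + x p.2 - 2 * x p.1 * x p.2) : ℤ) : ℝ) := by
      push_cast
      apply Finset.sum_congr rfl
      intro p _
      have e1 : (if φ (v p.1) k ≠ φ (v p.2) k then (1:ℝ) else 0)
          = ((x p.1 : ℤ) : ℝ) + ((x p.2 : ℤ) : ℝ) - 2 * ((x p.1 : ℤ):ℝ) * ((x p.2 : ℤ):ℝ) := by
        simp only [hxdef]
        by_cases h1 : φ (v p.1) k <;> by_cases h2 : φ (v p.2) k <;> simp [h1, h2] <;> norm_num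
      rw [e1]
    rw [hcast]
    exact_mod_cast this
  nlinarith [hmain, hl]
end

section
/- The prism over C_n (the Cartesian product C_n × K_2) embeds scale-2 isometrically into a hypercube: for even n = 2m it embeds isometrically into H_{m+1}, and for odd n = 2m+1 it embeds scale-2 isometrically into H_{2m+3}. -/
/-- The path metric of the prism over `C_n`:
`d((i,ε),(j,δ)) = d_{C_n}(i,j) + |ε - δ|`. -/
def prismDist (n : ℕ) (u v : Fin n × Bool) : ℕ :=
  cycleDist n u.1 v.1 + (if u.2 = v.2 then 0 else 1)

lemma card_three (N a b c d e f : ℕ) (p : ℕ → Prop) [DecidablePred p]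
    (hmem : ∀ k, k < N → (p k ↔ (a ≤ k ∧ k < b) ∨ (c ≤ k ∧ k < d) ∨ (e ≤ k ∧ k < f)))
    (h1 : a ≤ b) (h2 : b ≤ c) (h3 : c ≤ d) (h4 : d ≤ e) (h5 : e ≤ f) (h6 : f ≤ N) :
    ((Finset.range N).filter p).card = (b - a) + ((d - c) + (f - e)) := by
  have hset : (Finset.range N).filter p = Finset.Ico a b ∪ (Finset.Ico c d ∪ Finset.Ico e f) := by
    ext k
    simp only [Finset.mem_filter, Finset.mem_range, Finset.mem_union, Finset.mem_Ico]
    constructor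
    · rintro ⟨hk, hp⟩
      exact (hmem k hk).1 hp
    · intro h
      have hk : k < N := by omega
      exact ⟨hk, (hmem k hk).2 h⟩
  have hd2 : Disjoint (Finset.Ico c d) (Finset.Ico e f) := by
    rw [Finset.disjoint_left]
    intro x hx hx'
    simp only [Finset.mem_Ico] at hx hx'
    omega
  have hd1 : Disjoint (Finset.Ico a b) (Finset.Ico c d ∪ Finset.Ico e f) := by
    rw [Finset.disjoint_left]
    intro x hx hx'
    simp only [Finset.mem_union, Finset.mem_Ico] at hx hx'
    omega
  rw [hset, Finset.card_union_of_disjoint hd1, Finset.card_union_of_disjoint hd2,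
    Nat.card_Ico, Nat.card_Ico, Nat.card_Ico]

lemma hammingDist_cons {n : ℕ} (a b : Bool) (x y : Fin n → Bool) :
    hammingDist (Fin.cons a x : Fin (n+1) → Bool) (Fin.cons b y : Fin (n+1) → Bool)
      = (if a = b then 0 else 1) + hammingDist x y := by
  simp only [hammingDist, Finset.card_filter, Fin.sum_univ_succ, Fin.cons_zero, Fin.cons_succ]
  congr 1
  by_cases h : a = b <;> simp [h]

lemma ham_count {n : ℕ} (f g : ℕ → Bool) :
    hammingDist (fun k : Fin n => f k.val) (fun k : Fin n => g k.val)
      = ((Finset.range n).filter (fun k => f k ≠ g k)).card := by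
  simp only [hammingDist, Finset.card_filter]
  exact Fin.sum_univ_eq_sum_range (fun t => if f t ≠ g t then 1 else 0) n

lemma evenHam (m i j : ℕ) (hij : i ≤ j) (hj : j < 2 * m) :
    hammingDist (fun k : Fin m => decide (k.val < i ∧ i ≤ k.val + m))
        (fun k : Fin m => decide (k.val < j ∧ j ≤ k.val + m))
      = min (j - i) (2 * m - (j - i)) := by
  rw [ham_count (fun t => decide (t < i ∧ i ≤ t + m)) (fun t => decide (t < j ∧ j ≤ t + m))]
  have h := card_three m (i - m) (min (min i m) (j - m)) (max (j - m) (min i m)) (min j m)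
      (min j m) (min j m)
      (fun k => decide (k < i ∧ i ≤ k + m) ≠ decide (k < j ∧ j ≤ k + m))
      (by intro k hk; simp only [ne_eq, decide_eq_decide]; omega)
      (by omega) (by omega) (by omega) (by omega) (by omega) (by omega)
  omega

lemma oddHam (m i j : ℕ) (hij : i ≤ j) (hj : j < 2 * m + 1) :
    hammingDist
        (fun k : Fin (2 * m + 1) =>
          decide ((i ≤ k.val ∧ k.val < i + m) ∨ k.val + (2 * m + 1) < i + m))
        (fun k : Fin (2 * m + 1) =>
          decide ((j ≤ k.val ∧ k.val < j + m) ∨ k.val + (2 * m + 1) < j + m))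
      = 2 * min (j - i) (2 * m + 1 - (j - i)) := by
  rw [ham_count (fun t => decide ((i ≤ t ∧ t < i + m) ∨ t + (2 * m + 1) < i + m))
      (fun t => decide ((j ≤ t ∧ t < j + m) ∨ t + (2 * m + 1) < j + m))]
  rcases le_or_gt (j - i) m with hd | hd
  · have h := card_three (2 * m + 1) ((i + m) - (2 * m + 1)) ((j + m) - (2 * m + 1)) i j
        (min (i + m) (2 * m + 1)) (min (j + m) (2 * m + 1))
        (fun k => decide ((i ≤ k ∧ k < i + m) ∨ k + (2 * m + 1) < i + m)
          ≠ decide ((j ≤ k ∧ k < j + m) ∨ k + (2 * m + 1) < j + m))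
        (by intro k hk; simp only [ne_eq, decide_eq_decide]; omega)
        (by omega) (by omega) (by omega) (by omega) (by omega) (by omega)
    omega
  · have h := card_three (2 * m + 1) 0 i (j - (m + 1)) (i + m) j (2 * m + 1)
        (fun k => decide ((i ≤ k ∧ k < i + m) ∨ k + (2 * m + 1) < i + m)
          ≠ decide ((j ≤ k ∧ k < j + m) ∨ k + (2 * m + 1) < j + m))
        (by intro k hk; simp only [ne_eq, decide_eq_decide]; omega)
        (by omega) (by omega) (by omega) (by omega) (by omega) (by omega)
    omega

lemma ite_eq_comm (a b : Bool) : (if a = b then (0:ℕ) else 1) = (if b = a then 0 else 1) := by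
  by_cases h : a = b <;> simp [h, eq_comm]

/-- The prism over `C_n` embeds scale-2 isometrically into a hypercube: for even
`n = 2m` it embeds isometrically into `H_{m+1}`, and for odd `n = 2m+1` it embeds
scale-2 isometrically into `H_{2m+3}`. -/
theorem prism_embeds :
    (∀ m : ℕ, 2 ≤ m →
      ∃ φ : Fin (2 * m) × Bool → (Fin (m + 1) → Bool),
        ∀ u v, prismDist (2 * m) u v = hammingDist (φ u) (φ v)) ∧
    (∀ m : ℕ, 1 ≤ m →
      ∃ φ : Fin (2 * m + 1) × Bool → (Fin (2 * m + 3) → Bool),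
        ∀ u v, 2 * prismDist (2 * m + 1) u v = hammingDist (φ u) (φ v)) := by
  constructor
  · intro m _
    refine ⟨fun u => Fin.cons u.2 (fun k => decide (k.val < u.1.val ∧ u.1.val ≤ k.val + m)), ?_⟩
    rintro ⟨i, ε⟩ ⟨j, δ⟩
    dsimp only
    rw [hammingDist_cons]
    simp only [prismDist, cycleDist]
    rcases le_total i.val j.val with h | h
    · rw [evenHam m i.val j.val h j.isLt]
      have := i.isLt; have := j.isLt
      omega
    · rw [hammingDist_comm, evenHam m j.val i.val h i.isLt, ite_eq_comm]
      have := i.isLt; have := j.isLt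
      omega
  · intro m _
    refine ⟨fun u => Fin.cons u.2 (Fin.cons u.2
      (fun k => decide ((u.1.val ≤ k.val ∧ k.val < u.1.val + m)
        ∨ k.val + (2 * m + 1) < u.1.val + m))), ?_⟩
    rintro ⟨i, ε⟩ ⟨j, δ⟩
    dsimp only
    rw [hammingDist_cons, hammingDist_cons]
    simp only [prismDist, cycleDist]
    rcases le_total i.val j.val with h | h
    · rw [oddHam m i.val j.val h j.isLt]
      have := i.isLt; have := j.isLt
      omega
    · rw [hammingDist_comm, oddHam m j.val i.val h i.isLt, ite_eq_comm]
      have := i.isLt; have := j.isLt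
      omega
end
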